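/- Let G be a finite group with identity e and let S be a subset of G containing e such that |S| divides |G|. If there exist a finite group H with identity e' and a bijection φ : H → S such that φ(e') = e and Θ_G(S) = φ̂(Θ(H)^{|G|/|H|}), then S is a subgroup of G (i.e., S is closed under multiplication and inverses). -/

import Mathlib

/-- The group determinant `Θ(G)` of a finite group `G`. -/
noncomputable def groupDet (R G : Type*) [CommRing R] [Group G] [Finite G] :
    MvPolynomial G R := by
  classical
  letI := Fintype.ofFinite G
  exact Matrix.det (Matrix.of fun g h : G => MvPolynomial.X (g * h⁻¹))

/-- The generalized group determinant `Θ_G(S)` of a finite group `G` to a subset `S ⊆ G`. -/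
noncomputable def genGroupDet (R G : Type*) [CommRing R] [Group G] [Finite G] (S : Set G) :
    MvPolynomial S R := by
  classical
  letI := Fintype.ofFinite G
  exact Matrix.det (Matrix.of fun g h : G =>
    if hm : g * h⁻¹ ∈ S then MvPolynomial.X (⟨g * h⁻¹, hm⟩ : S) else 0)

/-!
Evaluate both sides of the identity at `x_1 = 1`, `x_a = ε₁`, `x_b = ε₂`, `x_c = ε₃` (all other
variables `0`) in `ℂ[ε₁, ε₂, ε₃] / (ε₁², ε₂², ε₃²)`, where `a, b, c ≠ 1`. Writing `P_x` for the
permutation matrix of left multiplication by `x`, the determinant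
`det (1 + ε₁ P_a + ε₂ P_b + ε₃ P_c)` depends only on the traces of `P_{ab}`, `P_{ac}`, `P_{bc}`,
`P_{abc}`, `P_{bac}`, i.e. on which of these products equal `1`. Comparing the coefficients of
`ε₁ε₂` and `ε₁ε₂ε₃` on both sides shows that `φ u * φ v = 1 ↔ u * v = 1`, so `φ` commutes with
inversion, and that `φ u * φ v` is one of `φ (u * v)`, `φ (v * u)`; hence `S = φ(H)` is closed
under products and inverses.
-/

open Matrix

section SquareZero

variable {A ι : Type*} [CommRing A] [Fintype ι] [DecidableEq ι]

theorem det_one_add_smul_of_sq_eq_zero {s : A} (hs : s ^ 2 = 0) (B : Matrix ι ι A) :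
    det (1 + s • B) = 1 + s * trace B := by
  rw [det_one_add_smul, hs, mul_zero, add_zero, mul_comm]

theorem det_add_smul_of_sq_eq_zero {s : A} (hs : s ^ 2 = 0) {M N : Matrix ι ι A}
    (hMN : M * N = 1) (B : Matrix ι ι A) :
    det (M + s • B) = det M * (1 + s * trace (N * B)) := by
  have hfactor : M + s • B = M * (1 + s • (N * B)) := by
    rw [Matrix.mul_add, Matrix.mul_one, Matrix.mul_smul, ← Matrix.mul_assoc, hMN, Matrix.one_mul]
  rw [hfactor, det_mul, det_one_add_smul_of_sq_eq_zero hs]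

theorem det_one_add_smul_add_smul_of_trace_eq_zero {ε δ : A} (hε : ε ^ 2 = 0) (hδ : δ ^ 2 = 0)
    {B C : Matrix ι ι A} (hB : trace B = 0) (hC : trace C = 0) :
    det (1 + ε • B + δ • C) = 1 - ε * δ * trace (B * C) := by
  have hinv : (1 + ε • B) * (1 - ε • B) = 1 := by
    rw [Matrix.mul_sub, Matrix.mul_one, Matrix.add_mul, Matrix.one_mul, smul_mul_smul_comm, ← sq,
      hε, zero_smul, add_zero, add_sub_cancel_right]
  rw [det_add_smul_of_sq_eq_zero hδ hinv, det_one_add_smul_of_sq_eq_zero hε, hB,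
    Matrix.sub_mul, Matrix.one_mul, trace_sub, hC, Matrix.smul_mul, trace_smul, smul_eq_mul]
  ring

def tripleExpansion (ε δ ζ p q r s : A) : A :=
  1 - ε * δ * p - ε * ζ * q - δ * ζ * r + ε * δ * ζ * s

theorem det_one_add_smul_add_smul_add_smul_of_trace_eq_zero {ε δ ζ : A} (hε : ε ^ 2 = 0)
    (hδ : δ ^ 2 = 0) (hζ : ζ ^ 2 = 0) {B C D : Matrix ι ι A} (hB : trace B = 0)
    (hC : trace C = 0) (hD : trace D = 0) :
    det (1 + ε • B + δ • C + ζ • D) = tripleExpansion ε δ ζ (trace (B * C)) (trace (B * D))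
      (trace (C * D)) (trace (B * C * D) + trace (C * B * D)) := by
  have hinv : (1 + ε • B + δ • C) * (1 - ε • B - δ • C + (ε * δ) • (B * C + C * B)) = 1 := by
    simp only [mul_sub, mul_add, add_mul, Matrix.smul_mul, Matrix.mul_smul, Matrix.one_mul,
      Matrix.mul_one, smul_smul]
    match_scalars <;> ring_nf <;> simp [hε, hδ]
  rw [det_add_smul_of_sq_eq_zero hζ hinv,
    det_one_add_smul_add_smul_of_trace_eq_zero hε hδ hB hC]
  simp only [Matrix.add_mul, Matrix.sub_mul, Matrix.one_mul, Matrix.smul_mul, trace_add,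
    trace_sub, trace_smul, smul_eq_mul, hD, tripleExpansion]
  ring_nf
  simp [hε, hδ]

theorem tripleExpansion_pow {ε δ ζ : A} (hε : ε ^ 2 = 0) (hδ : δ ^ 2 = 0) (hζ : ζ ^ 2 = 0)
    (p q r s : A) (k : ℕ) :
    tripleExpansion ε δ ζ p q r s ^ k =
      tripleExpansion ε δ ζ (k * p) (k * q) (k * r) (k * s) := by
  induction k with
  | zero => simp [tripleExpansion]
  | succ k ih =>
    rw [pow_succ, ih, tripleExpansion, tripleExpansion, tripleExpansion]
    push_cast
    ring_nf
    simp [hε, hδ, hζ]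

end SquareZero

section LeftRegular

variable {A K : Type*} [CommRing A] [Group K] [DecidableEq K]

variable (A) in
def leftRegMatrix (x : K) : Matrix K K A :=
  of fun g h => if g = x * h then 1 else 0

theorem leftRegMatrix_one : leftRegMatrix A (1 : K) = 1 := by
  ext g h
  simp [leftRegMatrix, one_apply]

theorem leftRegMatrix_mul [Fintype K] (x y : K) :
    leftRegMatrix A x * leftRegMatrix A y = leftRegMatrix A (x * y) := by
  ext g h
  simp [leftRegMatrix, mul_apply, mul_assoc]

theorem trace_leftRegMatrix [Fintype K] (x : K) :
    trace (leftRegMatrix A x) = ((Fintype.card K * if x = 1 then 1 else 0 : ℕ) : A) := by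
  split_ifs with hx
  · simp [hx, leftRegMatrix_one]
  · simp [trace, leftRegMatrix, hx]

theorem of_mul_inv_eq_sum_smul_leftRegMatrix [Fintype K] (w : K → A) :
    (of fun g h => w (g * h⁻¹)) = ∑ x, w x • leftRegMatrix A x := by
  ext g h
  simp [leftRegMatrix, Matrix.sum_apply, ← mul_inv_eq_iff_eq_mul]

end LeftRegular

section TestWeight

variable {A K : Type*} [CommRing A] [Group K] [DecidableEq K]

/-- The point at which both sides of the determinant identity are evaluated. -/
def testWeight (ε δ ζ : A) (a b c : K) : K → A :=
  Pi.single 1 1 + Pi.single a ε + Pi.single b δ + Pi.single c ζ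

theorem testWeight_comp {H : Type*} [Group H] [DecidableEq H] {ψ : H → K}
    (hψ : Function.Injective ψ) (hψ1 : ψ 1 = 1) (ε δ ζ : A) (u v w : H) :
    testWeight ε δ ζ (ψ u) (ψ v) (ψ w) ∘ ψ = testWeight ε δ ζ u v w := by
  ext x
  simp [testWeight, Pi.single_apply, hψ.eq_iff, ← hψ1]

theorem testWeight_eq_zero_of_notMem {S : Set K} {a b c g : K} (h1 : 1 ∈ S) (ha : a ∈ S)
    (hb : b ∈ S) (hc : c ∈ S) (hg : g ∉ S) (ε δ ζ : A) : testWeight ε δ ζ a b c g = 0 := by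
  have hne : ∀ x ∈ S, g ≠ x := fun x hx hgx => hg (hgx ▸ hx)
  simp [testWeight, hne 1 h1, hne a ha, hne b hb, hne c hc]

theorem det_testWeight [Fintype K] {ε δ ζ : A} (hε : ε ^ 2 = 0) (hδ : δ ^ 2 = 0)
    (hζ : ζ ^ 2 = 0) {a b c : K} (ha : a ≠ 1) (hb : b ≠ 1) (hc : c ≠ 1) :
    det (of fun g h => testWeight ε δ ζ a b c (g * h⁻¹)) =
      tripleExpansion ε δ ζ (trace (leftRegMatrix A (a * b))) (trace (leftRegMatrix A (a * c)))
        (trace (leftRegMatrix A (b * c)))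
        (trace (leftRegMatrix A (a * b * c)) + trace (leftRegMatrix A (b * a * c))) := by
  have htrace : ∀ x : K, x ≠ 1 → trace (leftRegMatrix A x) = 0 := fun x hx => by
    simp [trace_leftRegMatrix, hx]
  have hsum : (of fun g h => testWeight ε δ ζ a b c (g * h⁻¹)) =
      1 + ε • leftRegMatrix A a + δ • leftRegMatrix A b + ζ • leftRegMatrix A c := by
    rw [of_mul_inv_eq_sum_smul_leftRegMatrix]
    simp [testWeight, Finset.sum_add_distrib, add_smul, Pi.single_apply, ite_smul,
      leftRegMatrix_one]
  rw [hsum, det_one_add_smul_add_smul_add_smul_of_trace_eq_zero hε hδ hζ (htrace a ha)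
    (htrace b hb) (htrace c hc)]
  simp only [leftRegMatrix_mul]

end TestWeight

section Evaluation

open MvPolynomial

variable {R A : Type*} [CommRing R] [CommRing A] [Algebra R A]

theorem groupDet_eq_det {K : Type*} [Group K] [Fintype K] [DecidableEq K] :
    groupDet R K = det (of fun g h : K => X (g * h⁻¹)) := by
  unfold groupDet
  congr!

theorem genGroupDet_eq_det {G : Type*} [Group G] [Fintype G] [DecidableEq G] (S : Set G)
    [DecidablePred (· ∈ S)] :
    genGroupDet R G S =
      det (of fun g h : G => if hm : g * h⁻¹ ∈ S then X (⟨g * h⁻¹, hm⟩ : S) else 0) := by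
  unfold genGroupDet
  congr!

theorem aeval_groupDet {K : Type*} [Group K] [Fintype K] [DecidableEq K] (w : K → A) :
    aeval w (groupDet R K) = det (of fun g h => w (g * h⁻¹)) := by
  rw [groupDet_eq_det, AlgHom.map_det]
  congr 1
  ext g h
  simp

theorem aeval_genGroupDet {G : Type*} [Group G] [Fintype G] [DecidableEq G] {S : Set G}
    (w : G → A) (hw : ∀ g ∉ S, w g = 0) :
    aeval (fun s : S => w s) (genGroupDet R G S) = det (of fun g h => w (g * h⁻¹)) := by
  classical
  rw [genGroupDet_eq_det, AlgHom.map_det]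
  congr 1
  ext g h
  by_cases hm : g * h⁻¹ ∈ S <;> simp [hm, hw]

end Evaluation

section SquareZeroRing

open MvPolynomial

noncomputable def squaresIdeal : Ideal (MvPolynomial (Fin 3) ℂ) :=
  Ideal.span (Set.range fun i => X i ^ 2)

abbrev SqZeroRing : Type := MvPolynomial (Fin 3) ℂ ⧸ squaresIdeal

namespace SqZeroRing

noncomputable def ε (i : Fin 3) : SqZeroRing := Ideal.Quotient.mk _ (X i)

theorem ε_sq (i : Fin 3) : ε i ^ 2 = 0 := by
  rw [ε, ← map_pow, Ideal.Quotient.eq_zero_iff_mem]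
  exact Ideal.subset_span ⟨i, rfl⟩

/-- `∂₀∂₁∂₂ f` at `0` is the coefficient of `X 0 * X 1 * X 2` in `f`. -/
theorem eval_pderiv_eq_zero_of_mem_squaresIdeal {f : MvPolynomial (Fin 3) ℂ}
    (hf : f ∈ squaresIdeal) :
    eval 0 (pderiv 0 (pderiv 1 (pderiv 2 f))) = 0 := by
  obtain ⟨c, rfl⟩ := Ideal.mem_span_range_iff_exists_fun.mp hf
  simp [Fin.sum_univ_three, pderiv_X]

theorem eq_of_tripleExpansion_eq {p q r s p' q' r' s' : ℕ}
    (h : tripleExpansion (ε 0) (ε 1) (ε 2) (p : SqZeroRing) q r s =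
      tripleExpansion (ε 0) (ε 1) (ε 2) p' q' r' s') :
    p = p' ∧ s = s' := by
  let F : ℕ → ℕ → ℕ → ℕ → MvPolynomial (Fin 3) ℂ := fun p q r s =>
    tripleExpansion (X 0) (X 1) (X 2) p q r s
  have hF : ∀ p q r s : ℕ, tripleExpansion (ε 0) (ε 1) (ε 2) (p : SqZeroRing) q r s =
      Ideal.Quotient.mk _ (F p q r s) := by
    simp [F, tripleExpansion, ε]
  have hcoeff : ∀ f g, Ideal.Quotient.mk squaresIdeal f = Ideal.Quotient.mk squaresIdeal g →
      eval 0 (pderiv 0 (pderiv 1 (pderiv 2 f))) = eval 0 (pderiv 0 (pderiv 1 (pderiv 2 g))) := by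
    intro f g hfg
    have := eval_pderiv_eq_zero_of_mem_squaresIdeal (Ideal.Quotient.eq.mp hfg)
    rwa [map_sub, map_sub, map_sub, map_sub, sub_eq_zero] at this
  rw [hF, hF] at h
  -- multiplying by `X 2` moves the coefficient of `X 0 * X 1` to that of `X 0 * X 1 * X 2`
  have hp := hcoeff (F p q r s * X 2) (F p' q' r' s' * X 2) (by rw [map_mul, map_mul, h])
  have hs := hcoeff _ _ h
  simp [F, tripleExpansion, pderiv_X] at hp hs
  exact ⟨hp, hs⟩

end SqZeroRing

end SquareZeroRing

open SqZeroRing in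
theorem det_testWeight_eq_pow_of_genGroupDet_eq {G H : Type*} [Group G] [Fintype G]
    [DecidableEq G] [Group H] [Fintype H] [DecidableEq H] {S : Set G} (h1S : (1 : G) ∈ S)
    {φ : H → S} (hφ : Function.Injective φ) (hφ1 : (φ 1 : G) = 1) {k : ℕ}
    (hdet : genGroupDet ℂ G S = MvPolynomial.rename φ (groupDet ℂ H ^ k)) (u v w : H) :
    det (of fun g h => testWeight (ε 0) (ε 1) (ε 2) (φ u : G) (φ v) (φ w) (g * h⁻¹)) =
      det (of fun g h => testWeight (ε 0) (ε 1) (ε 2) u v w (g * h⁻¹)) ^ k := by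
  set t := testWeight (ε 0) (ε 1) (ε 2) (φ u : G) (φ v) (φ w)
  have ht : ∀ g ∉ S, t g = 0 := fun g hg =>
    testWeight_eq_zero_of_notMem h1S (φ u).2 (φ v).2 (φ w).2 hg _ _ _
  have hcomp : (fun s : S => t s) ∘ φ = testWeight (ε 0) (ε 1) (ε 2) u v w :=
    testWeight_comp (ψ := fun x => (φ x : G)) (Subtype.val_injective.comp hφ) hφ1 _ _ _ u v w
  have := congrArg (MvPolynomial.aeval fun s : S => t s) hdet
  rwa [aeval_genGroupDet t ht, MvPolynomial.aeval_rename, map_pow, hcomp,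
    aeval_groupDet] at this

section Comparison

open SqZeroRing

variable {G H : Type*} [Group G] [Fintype G] [DecidableEq G] [Group H] [Fintype H]
  [DecidableEq H]

theorem indicator_eq_of_det_testWeight_eq_pow {ψ : H → G} (hψ : Function.Injective ψ)
    (hψ1 : ψ 1 = 1) {k : ℕ} (hk : k * Fintype.card H = Fintype.card G) {u v w : H}
    (hu : u ≠ 1) (hv : v ≠ 1) (hw : w ≠ 1)
    (hdet : det (of fun g h => testWeight (ε 0) (ε 1) (ε 2) (ψ u) (ψ v) (ψ w) (g * h⁻¹)) =
      det (of fun g h => testWeight (ε 0) (ε 1) (ε 2) u v w (g * h⁻¹)) ^ k) :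
    (ψ u * ψ v = 1 ↔ u * v = 1) ∧
      ((if ψ u * ψ v * ψ w = 1 then 1 else 0) + (if ψ v * ψ u * ψ w = 1 then 1 else 0) : ℕ) =
        (if u * v * w = 1 then 1 else 0) + (if v * u * w = 1 then 1 else 0) := by
  have hψne : ∀ x, x ≠ 1 → ψ x ≠ 1 := fun x hx h => hx (hψ (h.trans hψ1.symm))
  rw [det_testWeight (ε_sq 0) (ε_sq 1) (ε_sq 2) (hψne u hu) (hψne v hv) (hψne w hw),
    det_testWeight (ε_sq 0) (ε_sq 1) (ε_sq 2) hu hv hw,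
    tripleExpansion_pow (ε_sq 0) (ε_sq 1) (ε_sq 2)] at hdet
  simp only [trace_leftRegMatrix, ← Nat.cast_add, ← Nat.cast_mul, ← mul_add,
    ← mul_assoc, hk] at hdet
  obtain ⟨hpair, htriple⟩ := eq_of_tripleExpansion_eq hdet
  have hG : 0 < Fintype.card G := Fintype.card_pos
  refine ⟨?_, Nat.eq_of_mul_eq_mul_left hG htriple⟩
  have := Nat.eq_of_mul_eq_mul_left hG hpair
  split_ifs at this <;> simp_all

end Comparison

section RangeClosure

variable {G H : Type*} [Group G] [Group H] {ψ : H → G}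

theorem map_inv_of_mul_eq_one_iff (hψ1 : ψ 1 = 1)
    (hpair : ∀ u v : H, u ≠ 1 → v ≠ 1 → (ψ u * ψ v = 1 ↔ u * v = 1)) (u : H) :
    ψ u⁻¹ = (ψ u)⁻¹ := by
  by_cases hu : u = 1
  · simp [hu, hψ1]
  · exact eq_inv_of_mul_eq_one_right ((hpair u u⁻¹ hu (inv_ne_one.mpr hu)).mpr
      (mul_inv_cancel u))

theorem mul_mem_range_of_mul_eq_one_iff [DecidableEq G] [DecidableEq H]
    (hψ : Function.Injective ψ) (hψ1 : ψ 1 = 1)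
    (hpair : ∀ u v : H, u ≠ 1 → v ≠ 1 → (ψ u * ψ v = 1 ↔ u * v = 1))
    (htriple : ∀ u v w : H, u ≠ 1 → v ≠ 1 → w ≠ 1 →
      ((if ψ u * ψ v * ψ w = 1 then 1 else 0) + (if ψ v * ψ u * ψ w = 1 then 1 else 0) : ℕ) =
        (if u * v * w = 1 then 1 else 0) + (if v * u * w = 1 then 1 else 0))
    (u v : H) : ψ u * ψ v ∈ Set.range ψ := by
  by_cases hu : u = 1
  · exact ⟨v, by simp [hu, hψ1]⟩
  by_cases hv : v = 1
  · exact ⟨u, by simp [hv, hψ1]⟩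
  by_cases huv : u * v = 1
  · exact ⟨1, by rw [hψ1, (hpair u v hu hv).mpr huv]⟩
  have hvu : v * u ≠ 1 := fun h => huv (mul_eq_one_comm.mp h)
  have hcount : ∀ z : H, z ≠ 1 →
      ((if ψ u * ψ v = ψ z then 1 else 0) + (if ψ v * ψ u = ψ z then 1 else 0) : ℕ) =
        (if u * v = z then 1 else 0) + (if v * u = z then 1 else 0) := by
    intro z hz
    simpa [map_inv_of_mul_eq_one_iff hψ1 hpair, mul_inv_eq_one] using
      htriple u v z⁻¹ hu hv (inv_ne_one.mpr hz)
  by_contra hnot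
  have hne : ∀ z, ψ u * ψ v ≠ ψ z := fun z h => hnot ⟨z, h.symm⟩
  have h₁ := hcount (u * v) huv
  have h₂ := hcount (v * u) hvu
  simp only [hne, if_false, zero_add] at h₁ h₂
  by_cases hcomm : u * v = v * u
  · rw [if_pos hcomm.symm] at h₁
    split_ifs at h₁
    omega
  · rw [if_neg (Ne.symm hcomm)] at h₁
    rw [if_neg hcomm, zero_add] at h₂
    have e₁ : ψ v * ψ u = ψ (u * v) := by_contra fun h => by simp [h] at h₁
    have e₂ : ψ v * ψ u = ψ (v * u) := by_contra fun h => by simp [h] at h₂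
    exact hcomm (hψ (e₁.symm.trans e₂))

end RangeClosure

/-- If `S ⊆ G` contains `e`, `|S| ∣ |G|`, and there are a finite group `H` and a bijection
`φ : H → S` with `φ(e') = e` and `Θ_G(S) = φ̂(Θ(H)^{|G|/|H|})`, then `S` is a subgroup of `G`
(closed under multiplication and inverses). -/
theorem genGroupDet_eq_pow_imp_subgroup {G : Type*} [Group G] [Fintype G]
    (S : Set G) (h1S : (1 : G) ∈ S) (hdvd : Nat.card S ∣ Fintype.card G)
    (H : Type*) [Group H] [Fintype H] (φ : H → S)
    (hbij : Function.Bijective φ) (h1 : φ 1 = ⟨1, h1S⟩)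
    (hdet : genGroupDet ℂ G S =
      MvPolynomial.rename φ ((groupDet ℂ H) ^ (Fintype.card G / Fintype.card H))) :
    (∀ a ∈ S, ∀ b ∈ S, a * b ∈ S) ∧ ∀ a ∈ S, a⁻¹ ∈ S := by
  classical
  set ψ : H → G := Subtype.val ∘ φ
  have hψ : Function.Injective ψ := Subtype.val_injective.comp hbij.injective
  have hψ1 : ψ 1 = 1 := congrArg Subtype.val h1
  have hrange : Set.range ψ = S := by
    rw [Set.range_comp, hbij.surjective.range_eq, Set.image_univ, Subtype.range_coe]
  have hk : Fintype.card G / Fintype.card H * Fintype.card H = Fintype.card G := by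
    refine Nat.div_mul_cancel ?_
    rwa [← Nat.card_eq_of_bijective φ hbij, Nat.card_eq_fintype_card] at hdvd
  have htest := fun (u v w : H) (hu : u ≠ 1) (hv : v ≠ 1) (hw : w ≠ 1) =>
    indicator_eq_of_det_testWeight_eq_pow hψ hψ1 hk hu hv hw
      (det_testWeight_eq_pow_of_genGroupDet_eq h1S hbij.injective hψ1 hdet u v w)
  have hpair : ∀ u v : H, u ≠ 1 → v ≠ 1 → (ψ u * ψ v = 1 ↔ u * v = 1) :=
    fun u v hu hv => (htest u v u hu hv hu).1
  rw [← hrange]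
  refine ⟨?_, ?_⟩
  · rintro _ ⟨u, rfl⟩ _ ⟨v, rfl⟩
    exact mul_mem_range_of_mul_eq_one_iff hψ hψ1 hpair
      (fun u v w hu hv hw => (htest u v w hu hv hw).2) u v
  · rintro _ ⟨u, rfl⟩
    exact ⟨u⁻¹, map_inv_of_mul_eq_one_iff hψ1 hpair u⟩
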